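/- arXiv:1403.4345 — 4 statements merged into one kernel-verified Lean document; each statement's English description precedes it below -/
import Mathlib

section
/- If two permutations v, w in S_n satisfy v(i) = w(i) for some index i, then v ≤ w in Bruhat order if and only if the flattened permutations of length n-1 obtained by deleting position i from v and from w satisfy the same Bruhat order relation. -/
/-!
Both directions rest on Ehresmann's tableau criterion: `u ≤ w` in Bruhat order iff for all
`a, t` the number of positions `j ≤ a` with `u j ≥ t` is at most the same count for `w`.
Deleting a position `i` that carries the same value `p` in `v` and in `w` shifts every such count
of `v` and of `w` by the same amount, which gives the forward direction. Conversely, a Bruhat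
chain from `dv` to `dw` lifts transposition by transposition to a chain starting at `v` that
keeps the value `p` at position `i`; its endpoint has the same deletion as `w`, so it is `w`.

The hard half of the criterion goes by induction on the total rank deficit: if `w` dominates
`u ≠ w` and `k` is the first position where they differ, then `u k < w k`, and transposing `k`
with the leftmost later position whose `u`-value lies in `(u k, w k]` is a Bruhat step that
stays dominated by `w`.
-/

/-- One step of the Bruhat order: `w = v·t_{ij}` with `i < j` and `v(i) < v(j)`. -/
def BruhatStep {n : ℕ} (v w : Equiv.Perm (Fin n)) : Prop :=
  ∃ i j : Fin n, i < j ∧ v i < v j ∧ w = v * Equiv.swap i j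

/-- Bruhat order on `S_n`: the reflexive-transitive closure of `BruhatStep`. -/
def BruhatLE {n : ℕ} : Equiv.Perm (Fin n) → Equiv.Perm (Fin n) → Prop :=
  Relation.ReflTransGen BruhatStep

open Finset Equiv

section Dominance

variable {m : ℕ} {u w : Perm (Fin m)}

def rankCount (u : Perm (Fin m)) (a t : ℕ) : ℕ :=
  #{j : Fin m | (j : ℕ) ≤ a ∧ t ≤ (u j : ℕ)}

def Dominates (u w : Perm (Fin m)) : Prop :=
  ∀ a t, rankCount u a t ≤ rankCount w a t

theorem rankCount_mul_swap {k l : Fin m} (hkl : k < l) (hu : u k < u l)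
    (a t : ℕ) :
    rankCount (u * swap k l) a t =
      rankCount u a t + if (k : ℕ) ≤ a ∧ a < l ∧ (u k : ℕ) < t ∧ t ≤ u l then 1 else 0 := by
  have hsplit : ∀ v : Perm (Fin m), rankCount v a t =
      (if (k : ℕ) ≤ a ∧ t ≤ (v k : ℕ) then 1 else 0) +
        (if (l : ℕ) ≤ a ∧ t ≤ (v l : ℕ) then 1 else 0) +
        ∑ j ∈ {k, l}ᶜ, if (j : ℕ) ≤ a ∧ t ≤ (v j : ℕ) then 1 else 0 := fun v => by
    rw [rankCount, card_filter, ← sum_add_sum_compl {k, l}, sum_pair hkl.ne]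
  have htail : ∀ j ∈ ({k, l} : Finset (Fin m))ᶜ, (u * swap k l) j = u j := fun j hj => by
    simp only [mem_compl, mem_insert, mem_singleton, not_or] at hj
    rw [Perm.mul_apply, swap_apply_of_ne_of_ne hj.1 hj.2]
  rw [hsplit, hsplit u, sum_congr rfl fun j hj => by rw [htail j hj]]
  simp only [Perm.mul_apply, swap_apply_left, swap_apply_right]
  split_ifs <;> omega

theorem rankCount_le_mul_swap {k l : Fin m} (hkl : k < l) (hu : u k < u l)
    (a t : ℕ) : rankCount u a t ≤ rankCount (u * swap k l) a t := by
  rw [rankCount_mul_swap hkl hu]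
  omega

theorem rankCount_eq_add_card (u : Perm (Fin m)) (a : ℕ) {t s : ℕ} (hts : t ≤ s) :
    rankCount u a t =
      rankCount u a s + #{j : Fin m | (j : ℕ) ≤ a ∧ t ≤ (u j : ℕ) ∧ (u j : ℕ) < s} := by
  rw [rankCount, rankCount, ← card_filter_add_card_filter_not (fun j => s ≤ (u j : ℕ)),
    filter_filter, filter_filter]
  congr 2 <;> ext j <;> simp only [mem_filter, mem_univ, true_and, not_le] <;> omega

theorem dominates_of_bruhatLE (h : BruhatLE u w) : Dominates u w := by
  induction h with
  | refl => exact fun a t => le_rfl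
  | tail _ hstep ih =>
    obtain ⟨k, l, hkl, hu, rfl⟩ := hstep
    exact fun a t => (ih a t).trans (rankCount_le_mul_swap hkl hu a t)

theorem Dominates.apply_le_of_forall_lt_eq (hd : Dominates u w) {k : Fin m}
    (hagree : ∀ j < k, u j = w j) : u k ≤ w k := by
  by_contra! hlt
  refine (hd k (u k)).not_gt (card_lt_card ((ssubset_iff_of_subset ?_).2 ⟨k, ?_, ?_⟩)) <;>
    simp only [subset_iff, mem_filter, mem_univ, true_and]
  · rintro j ⟨hjk, hj⟩
    rcases (Fin.le_iff_val_le_val.2 hjk).lt_or_eq with hjk | rfl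
    · exact ⟨hjk.le, hagree j hjk ▸ hj⟩
    · omega
  · omega
  · omega

theorem Dominates.mul_swap (hd : Dominates u w) {k l : Fin m}
    (hagree : ∀ j < k, u j = w j) (hkl : k < l) (hul : u k < u l) (hlw : u l ≤ w k)
    (hmin : ∀ j, k < j → j < l → ¬ (u k < u j ∧ u j ≤ w k)) :
    Dominates (u * swap k l) w := by
  intro a t
  rw [rankCount_mul_swap hkl hul]
  split_ifs with h
  swap
  · simpa using hd a t
  obtain ⟨hka, hal, hkt, htl⟩ := h
  -- by minimality of `l`, the band `[t, w k]` of `u` up to `a` only meets positions before `k`,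
  -- where `u = w`; the band of `w` also contains `k`
  have hband : #{j : Fin m | (j : ℕ) ≤ a ∧ t ≤ (u j : ℕ) ∧ (u j : ℕ) < w k + 1} <
      #{j : Fin m | (j : ℕ) ≤ a ∧ t ≤ (w j : ℕ) ∧ (w j : ℕ) < w k + 1} := by
    refine card_lt_card ((ssubset_iff_of_subset ?_).2 ⟨k, ?_, ?_⟩) <;>
      simp only [subset_iff, mem_filter, mem_univ, true_and]
    · rintro j ⟨hja, htj, hjw⟩
      have hjk : j < k := by
        by_contra! hkj
        rcases hkj.lt_or_eq with hkj | rfl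
        · exact hmin j hkj (by omega) ⟨by omega, by omega⟩
        · omega
      exact hagree j hjk ▸ ⟨hja, htj, hjw⟩
    · omega
    · omega
  have hu := rankCount_eq_add_card u a (t := t) (s := (w k : ℕ) + 1) (by omega)
  have hw := rankCount_eq_add_card w a (t := t) (s := (w k : ℕ) + 1) (by omega)
  have := hd a ((w k : ℕ) + 1)
  omega

theorem Dominates.exists_mul_swap (hd : Dominates u w) (hne : u ≠ w) :
    ∃ k l, k < l ∧ u k < u l ∧ Dominates (u * swap k l) w := by
  obtain ⟨k, hk, hkmin⟩ :=
    wellFounded_lt.has_min {j | u j ≠ w j} (not_forall.1 fun h => hne (Equiv.ext h))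
  have hagree : ∀ j < k, u j = w j := fun j hj => not_not.1 fun h => hkmin j h hj
  have hlt : u k < w k := (hd.apply_le_of_forall_lt_eq hagree).lt_of_ne hk
  have hkj : k < u.symm (w k) := by
    by_contra! hle
    rcases hle.lt_or_eq with hlt' | heq
    · exact hlt'.ne (w.injective ((hagree _ hlt').symm.trans (u.apply_symm_apply _)))
    · have huk := u.apply_symm_apply (w k)
      rw [heq] at huk
      exact hk huk
  obtain ⟨l, ⟨hkl, hul, hlw⟩, hlmin⟩ := wellFounded_lt.has_min
    {j | k < j ∧ u k < u j ∧ u j ≤ w k} ⟨u.symm (w k), hkj, by simpa using hlt, by simp⟩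
  exact ⟨k, l, hkl, hul, hd.mul_swap hagree hkl hul hlw fun j hkj hjl h => hlmin j ⟨hkj, h⟩ hjl⟩

def rankSum (u : Perm (Fin m)) : ℕ :=
  ∑ a : Fin m, ∑ t : Fin m, rankCount u a t

theorem Dominates.rankSum_le (hd : Dominates u w) : rankSum u ≤ rankSum w :=
  sum_le_sum fun a _ => sum_le_sum fun t _ => hd a t

theorem rankSum_lt_mul_swap {k l : Fin m} (hkl : k < l) (hu : u k < u l) :
    rankSum u < rankSum (u * swap k l) := by
  refine sum_lt_sum (fun a _ => sum_le_sum fun t _ => rankCount_le_mul_swap hkl hu a t)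
    ⟨k, mem_univ _, sum_lt_sum (fun t _ => rankCount_le_mul_swap hkl hu k t) ⟨u l, mem_univ _, ?_⟩⟩
  rw [rankCount_mul_swap hkl hu, if_pos ⟨le_rfl, hkl, hu, le_rfl⟩]
  omega

theorem bruhatLE_of_dominates (hd : Dominates u w) : BruhatLE u w := by
  induction hgap : rankSum w - rankSum u using Nat.strong_induction_on generalizing u with
  | _ N ih =>
    by_cases hne : u = w
    · exact hne ▸ Relation.ReflTransGen.refl
    obtain ⟨k, l, hkl, hu, hd'⟩ := hd.exists_mul_swap hne
    have hlt := rankSum_lt_mul_swap hkl hu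
    have hle := hd'.rankSum_le
    exact .head ⟨k, l, hkl, hu, rfl⟩ (ih _ (by omega) hd' rfl)

theorem bruhatLE_iff_dominates : BruhatLE u w ↔ Dominates u w :=
  ⟨dominates_of_bruhatLE, bruhatLE_of_dominates⟩

end Dominance

section Deletion

variable {n : ℕ} {i : Fin (n + 1)} {u : Perm (Fin (n + 1))} {d d' : Perm (Fin n)}

/-- The shift `Fin.succAbove p`, extended to all of `ℕ` so that ranks can be compared at
thresholds outside `Fin n`. -/
def natSuccAbove (p x : ℕ) : ℕ :=
  if p ≤ x then x + 1 else x

theorem val_succAbove_eq_natSuccAbove (p : Fin (n + 1)) (y : Fin n) :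
    (p.succAbove y : ℕ) = natSuccAbove p y := by
  rcases lt_or_ge (Fin.castSucc y) p with h | h
  · rw [Fin.succAbove_of_castSucc_lt _ _ h, natSuccAbove, if_neg (by simpa [Fin.lt_def] using h)]
    rfl
  · rw [Fin.succAbove_of_le_castSucc _ _ h, natSuccAbove, if_pos (by simpa [Fin.le_def] using h)]
    rfl

theorem natSuccAbove_le_natSuccAbove_iff {p x y : ℕ} :
    natSuccAbove p x ≤ natSuccAbove p y ↔ x ≤ y := by
  unfold natSuccAbove
  split_ifs <;> omega

/-- `d` is the flattening of `u` with position `i` deleted. -/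
def IsDeletion (i : Fin (n + 1)) (u : Perm (Fin (n + 1))) (d : Perm (Fin n)) : Prop :=
  ∀ b, (u i).succAbove (d b) = u (i.succAbove b)

theorem isDeletion_of_lt_iff (hd : ∀ a b, d a < d b ↔ u (i.succAbove a) < u (i.succAbove b)) :
    IsDeletion i u d := by
  have hne : ∀ b, u (i.succAbove b) ≠ u i := fun b => u.injective.ne (i.succAbove_ne b)
  choose g hg using fun b => Fin.exists_succAbove_eq (hne b)
  have hmono : StrictMono (g ∘ d.symm) := fun x y hxy => by
    rw [Function.comp_apply, Function.comp_apply, ← (Fin.strictMono_succAbove (u i)).lt_iff_lt,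
      hg, hg, ← hd, apply_symm_apply, apply_symm_apply]
    exact hxy
  intro b
  have hb : g (d.symm (d b)) = d b := hmono.apply_eq
  rw [symm_apply_apply] at hb
  rw [← hb, hg]

theorem IsDeletion.eq_of_apply_eq {u' : Perm (Fin (n + 1))} (hu : IsDeletion i u d)
    (hu' : IsDeletion i u' d) (h : u i = u' i) : u = u' := by
  refine Equiv.ext fun j => ?_
  rcases eq_or_ne j i with rfl | hj
  · exact h
  · obtain ⟨b, rfl⟩ := Fin.exists_succAbove_eq hj
    rw [← hu b, ← hu' b, h]

theorem mul_swap_succAbove_apply_self (a b : Fin n) :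
    (u * swap (i.succAbove a) (i.succAbove b)) i = u i := by
  rw [Perm.mul_apply, swap_apply_of_ne_of_ne (i.succAbove_ne a).symm (i.succAbove_ne b).symm]

theorem IsDeletion.mul_swap (hu : IsDeletion i u d) (a b : Fin n) :
    IsDeletion i (u * swap (i.succAbove a) (i.succAbove b)) (d * swap a b) := fun c => by
  rw [mul_swap_succAbove_apply_self, Perm.mul_apply, Perm.mul_apply,
    Fin.succAbove_right_injective.swap_apply, hu]

theorem IsDeletion.exists_bruhatLE (hu : IsDeletion i u d) (hd : BruhatLE d d') :
    ∃ u', BruhatLE u u' ∧ u' i = u i ∧ IsDeletion i u' d' := by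
  induction hd with
  | refl => exact ⟨u, .refl, rfl, hu⟩
  | tail _ hstep ih =>
    obtain ⟨u₁, hu₁, hi, hdel⟩ := ih
    obtain ⟨a, b, hab, hval, rfl⟩ := hstep
    refine ⟨u₁ * swap (i.succAbove a) (i.succAbove b),
      hu₁.tail ⟨_, _, Fin.strictMono_succAbove i hab, ?_, rfl⟩,
      (mul_swap_succAbove_apply_self a b).trans hi, hdel.mul_swap a b⟩
    rw [← hdel a, ← hdel b]
    exact Fin.strictMono_succAbove _ hval

theorem IsDeletion.rankCount_natSuccAbove (hu : IsDeletion i u d) (a t : ℕ) :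
    rankCount u (natSuccAbove i a) (natSuccAbove (u i) t) =
      rankCount d a t + if (i : ℕ) ≤ a ∧ t < u i then 1 else 0 := by
  simp only [rankCount, card_filter]
  rw [Fin.sum_univ_succAbove _ i, add_comm]
  congr 1
  · refine sum_congr rfl fun b _ => ?_
    rw [← hu b, val_succAbove_eq_natSuccAbove, val_succAbove_eq_natSuccAbove]
    simp only [natSuccAbove_le_natSuccAbove_iff]
  · unfold natSuccAbove
    split_ifs <;> omega

theorem IsDeletion.dominates {v w : Perm (Fin (n + 1))} {dv dw : Perm (Fin n)}
    (hv : IsDeletion i v dv) (hw : IsDeletion i w dw) (h : v i = w i) (hd : Dominates v w) :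
    Dominates dv dw := fun a t => by
  have hv' := hv.rankCount_natSuccAbove a t
  have hw' := hw.rankCount_natSuccAbove a t
  rw [← h] at hw'
  have := hd (natSuccAbove i a) (natSuccAbove (v i) t)
  omega

end Deletion

/-- If `v(i) = w(i)` for some position `i`, then `v ≤ w` in Bruhat order iff the flattened
permutations obtained by deleting position `i` from `v` and from `w` satisfy the same relation.
Here `dv` (resp. `dw`) is the flattening of `v` (resp. `w`) with position `i` deleted:
it has the same relative order as the values of `v` (resp. `w`) on positions other than `i`. -/
theorem bruhat_iff_bruhat_of_delete (n : ℕ) (v w : Equiv.Perm (Fin (n + 1)))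
    (i : Fin (n + 1)) (h : v i = w i)
    (dv dw : Equiv.Perm (Fin n))
    (hdv : ∀ a b : Fin n, dv a < dv b ↔ v (i.succAbove a) < v (i.succAbove b))
    (hdw : ∀ a b : Fin n, dw a < dw b ↔ w (i.succAbove a) < w (i.succAbove b)) :
    BruhatLE v w ↔ BruhatLE dv dw := by
  have hv := isDeletion_of_lt_iff hdv
  have hw := isDeletion_of_lt_iff hdw
  refine ⟨fun hvw => ?_, fun hd => ?_⟩
  · rw [bruhatLE_iff_dominates] at hvw ⊢
    exact hv.dominates hw h hvw
  · obtain ⟨u, hvu, hui, hu⟩ := hv.exists_bruhatLE hd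
    rwa [hu.eq_of_apply_eq hw (hui.trans h)] at hvu
end

section
/- The number of permutations in S_n avoiding both patterns 321 and 3412 equals the Fibonacci number F_{2n-1}, where F_1 = F_2 = 1. -/
/-- `w` contains the pattern `v` if some subsequence of `w` has the same relative order as `v`. -/
def Contains {n m : ℕ} (w : Equiv.Perm (Fin n)) (v : Equiv.Perm (Fin m)) : Prop :=
  ∃ f : Fin m → Fin n, StrictMono f ∧ ∀ a b : Fin m, v a < v b ↔ w (f a) < w (f b)

/-- The pattern 321 (one-line notation). -/
def p321 : Equiv.Perm (Fin 3) := ⟨![2, 1, 0], ![2, 1, 0], by decide, by decide⟩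

/-- The pattern 3412 (one-line notation). -/
def p3412 : Equiv.Perm (Fin 4) := ⟨![2, 3, 0, 1], ![2, 3, 0, 1], by decide, by decide⟩

/-!
Call a permutation Boolean if it avoids 321 and 3412, and sort the Boolean permutations `w` of
`Fin (m + 1)` by the position `k` of their maximum.
Everything after `k` increases (otherwise the maximum starts a 321), and every entry after
position `k + 1` exceeds every entry before `k` (otherwise the maximum is the 4 of a 3412). Counting
then forces `w p = p - 1` for `p > k + 1`, so `w` is a Boolean permutation `u` of size
`min (k + 1) m`, padded with fixed points, with the maximum inserted at `k`; conversely every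
such insertion is Boolean, because an occurrence of 321 or 3412 cannot use the maximum or the
tail. So the number `b n` of Boolean permutations of size `n` satisfies
`b (m + 1) = ∑_{k < m} b (k + 1) + b m` and `b 0 = 1`, which is the recurrence
`F (2m+1) = F (2m) + F (2m-1)`, `F (2m) = ∑_{k < m} F (2k+1)` of the odd Fibonacci numbers.
-/

open Equiv Finset

def IsBoolean {n : ℕ} (w : Perm (Fin n)) : Prop := ¬ Contains w p321 ∧ ¬ Contains w p3412

noncomputable def numBoolean (n : ℕ) : ℕ := Nat.card {w : Perm (Fin n) // IsBoolean w}

section Patterns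

variable {n m p : ℕ}

theorem Contains.trans {w : Perm (Fin n)} {u : Perm (Fin m)} {v : Perm (Fin p)}
    (hwu : Contains w u) (huv : Contains u v) : Contains w v := by
  obtain ⟨e, he, hwu⟩ := hwu
  obtain ⟨f, hf, huv⟩ := huv
  exact ⟨e ∘ f, he.comp hf, fun a b => (huv a b).trans (hwu _ _)⟩

theorem IsBoolean.of_contains {w : Perm (Fin n)} {u : Perm (Fin m)} (hw : IsBoolean w)
    (h : Contains w u) : IsBoolean u :=
  ⟨fun h' => hw.1 (h.trans h'), fun h' => hw.2 (h.trans h')⟩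

theorem contains_p321_iff (w : Perm (Fin n)) :
    Contains w p321 ↔ ∃ i j l : Fin n, i < j ∧ j < l ∧ w l < w j ∧ w j < w i := by
  constructor
  · rintro ⟨f, hf, hv⟩
    exact ⟨f 0, f 1, f 2, hf (by decide), hf (by decide),
      (hv 2 1).mp (by decide), (hv 1 0).mp (by decide)⟩
  · rintro ⟨i, j, l, hij, hjl, hlj, hji⟩
    refine ⟨![i, j, l], fun a b hab => ?_, fun a b => ?_⟩ <;>
      fin_cases a <;> fin_cases b <;> simp_all [p321] <;> omega

theorem contains_p3412_iff (w : Perm (Fin n)) :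
    Contains w p3412 ↔ ∃ i j l r : Fin n, i < j ∧ j < l ∧ l < r ∧
      w l < w r ∧ w r < w i ∧ w i < w j := by
  constructor
  · rintro ⟨f, hf, hv⟩
    exact ⟨f 0, f 1, f 2, f 3, hf (by decide), hf (by decide), hf (by decide),
      (hv 2 3).mp (by decide), (hv 3 0).mp (by decide), (hv 0 1).mp (by decide)⟩
  · rintro ⟨i, j, l, r, hij, hjl, hlr, hlr', hri, hij'⟩
    refine ⟨![i, j, l, r], fun a b hab => ?_, fun a b => ?_⟩ <;>
      fin_cases a <;> fin_cases b <;> simp_all [p3412] <;> omega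

end Patterns

section Counting

variable {α : Type*} {n : ℕ} {f : α → Fin n} {t : Finset α} {x : Fin n}

theorem card_le_of_forall_apply_lt (hf : Function.Injective f) (h : ∀ a ∈ t, f a < x) :
    #t ≤ x :=
  calc #t ≤ #(Iio x) := card_le_card_of_injOn f (fun a ha => by simpa using h a ha) hf.injOn
    _ = x := Fin.card_Iio x

theorem card_add_lt_of_forall_lt_apply (hf : Function.Injective f) (h : ∀ a ∈ t, x < f a) :
    #t + x < n := by
  have : #t ≤ #(Ioi x) := card_le_card_of_injOn f (fun a ha => by simpa using h a ha) hf.injOn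
  rw [Fin.card_Ioi] at this
  omega

end Counting

section MaxPosition

variable {m : ℕ} {w : Perm (Fin (m + 1))} {k : Fin (m + 1)}

theorem IsBoolean.apply_lt_apply_of_max_lt (hw : IsBoolean w) (hk : w k = Fin.last m)
    {i j : Fin (m + 1)} (hki : k < i) (hij : i < j) : w i < w j := by
  have hik : w i < w k := hk ▸ Fin.lt_last_iff_ne_last.2 (hk ▸ w.injective.ne hki.ne')
  by_contra hji
  have hji : w j < w i := (not_lt.1 hji).lt_of_ne (w.injective.ne hij.ne')
  exact hw.1 ((contains_p321_iff w).2 ⟨k, i, j, hki, hij, hji, hik⟩)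

theorem IsBoolean.apply_lt_apply_of_lt_max (hw : IsBoolean w) (hk : w k = Fin.last m)
    {a d : Fin (m + 1)} (hak : a < k) (hkd : k.val + 1 < d) : w a < w d := by
  have hak' : w a < w k := hk ▸ Fin.lt_last_iff_ne_last.2 (hk ▸ w.injective.ne hak.ne)
  let c : Fin (m + 1) := ⟨k + 1, by omega⟩
  have hkc : k < c := Fin.lt_def.2 k.val.lt_succ_self
  have hcd : c < d := hkd
  by_contra hda
  have hda : w d < w a := (not_lt.1 hda).lt_of_ne (w.injective.ne (by omega))
  exact hw.2 ((contains_p3412_iff w).2 ⟨a, k, c, d, hak, hkc, hcd,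
    hw.apply_lt_apply_of_max_lt hk hkc hcd, hda, hak'⟩)

theorem IsBoolean.val_apply_of_max_add_one_lt (hw : IsBoolean w) (hk : w k = Fin.last m)
    {d : Fin (m + 1)} (hkd : k.val + 1 < d) : (w d).val = d - 1 := by
  have hbelow : #((Iio d).erase k) ≤ w d := by
    refine card_le_of_forall_apply_lt w.injective fun p hp => ?_
    obtain ⟨hpk, hpd⟩ := by simpa using hp
    rcases lt_or_gt_of_ne hpk with hpk | hpk
    · exact hw.apply_lt_apply_of_lt_max hk hpk hkd
    · exact hw.apply_lt_apply_of_max_lt hk hpk hpd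
  have habove : #(insert k (Ioi d)) + w d < m + 1 := by
    refine card_add_lt_of_forall_lt_apply w.injective fun p hp => ?_
    rcases mem_insert.1 hp with rfl | hp
    · exact hk ▸ Fin.lt_last_iff_ne_last.2 (hk ▸ w.injective.ne (by omega))
    · exact hw.apply_lt_apply_of_max_lt hk (by omega) (by simpa using hp)
  rw [card_erase_of_mem (mem_Iio.2 (by omega)), Fin.card_Iio] at hbelow
  rw [card_insert_of_notMem (by rw [mem_Ioi]; omega), Fin.card_Ioi] at habove
  omega

theorem IsBoolean.val_apply_lt_of_ne_max (hw : IsBoolean w) (hk : w k = Fin.last m)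
    {p : Fin (m + 1)} (hpk : p ≠ k) (hps : p.val ≤ min (k.val + 1) m) :
    (w p).val < min (k.val + 1) m := by
  by_contra hwp
  have hwm : (w p).val ≠ m := fun h => hpk (w.injective (hk ▸ Fin.ext h))
  let q : Fin (m + 1) := ⟨w p + 1, by omega⟩
  have hq : (w q).val = w p := by
    simpa [q] using hw.val_apply_of_max_add_one_lt hk (d := q) (by simp [q]; omega)
  have hqp := congrArg Fin.val (w.injective (Fin.ext hq))
  simp only [q] at hqp
  omega

end MaxPosition

theorem Fin.val_succAbove {n : ℕ} (p : Fin (n + 1)) (i : Fin n) :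
    (p.succAbove i).val = if i.val < p.val then i.val else i.val + 1 := by
  unfold Fin.succAbove
  split_ifs <;> simp_all [Fin.lt_def]

section Insertion

variable {m : ℕ} (k : Fin (m + 1))

def headPos (j : Fin (min (k.val + 1) m)) : Fin (m + 1) :=
  k.succAbove (Fin.castLE (min_le_right _ _) j)

/-- In one-line notation: `u 0, …, u (k-1), m, u k, k+1, …, m-1`, or `u, m` when `k = m`. -/
noncomputable def insertMaxPad (u : Perm (Fin (min (k.val + 1) m))) : Perm (Fin (m + 1)) :=
  (finSuccEquiv' k).trans
    ((optionCongr (u.viaEmbedding (Fin.castLEEmb (min_le_right _ _)))).trans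
      (finSuccEquiv' (Fin.last m)).symm)

variable {k}

theorem strictMono_headPos : StrictMono (headPos k) :=
  (Fin.strictMono_succAbove k).comp (Fin.strictMono_castLE _)

theorem headPos_ne (j : Fin (min (k.val + 1) m)) : headPos k j ≠ k :=
  Fin.succAbove_ne _ _

theorem val_headPos_le (j : Fin (min (k.val + 1) m)) : (headPos k j).val ≤ min (k.val + 1) m := by
  have := Fin.val_succAbove k (Fin.castLE (min_le_right _ _) j)
  rw [headPos, this, Fin.val_castLE]
  split_ifs <;> omega

theorem exists_headPos_eq {p : Fin (m + 1)} (hpk : p ≠ k) (hps : p.val ≤ min (k.val + 1) m) :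
    ∃ j, headPos k j = p := by
  obtain ⟨z, rfl⟩ := Fin.exists_succAbove_eq hpk
  have := Fin.val_succAbove k z
  exact ⟨⟨z, by split_ifs at this <;> omega⟩, rfl⟩

variable (u : Perm (Fin (min (k.val + 1) m)))

@[simp]
theorem insertMaxPad_apply_self : insertMaxPad k u k = Fin.last m := by
  simp [insertMaxPad]

theorem insertMaxPad_apply_headPos (j : Fin (min (k.val + 1) m)) :
    (insertMaxPad k u (headPos k j)).val = u j := by
  have h := u.viaEmbedding_apply (Fin.castLEEmb (min_le_right _ _)) j
  simp only [Fin.castLEEmb_apply] at h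
  simp [insertMaxPad, headPos, h]

theorem val_insertMaxPad_of_add_one_lt {p : Fin (m + 1)} (hkp : k.val + 1 < p) :
    (insertMaxPad k u p).val = p - 1 := by
  obtain ⟨z, rfl⟩ := Fin.exists_succAbove_eq (x := p) (y := k) (by omega)
  have hz := Fin.val_succAbove k z
  have hzs : z ∉ Set.range (Fin.castLEEmb (min_le_right (k.val + 1) m)) := by
    rintro ⟨j, hj⟩
    have := congrArg Fin.val hj
    simp only [Fin.castLEEmb_apply, Fin.val_castLE] at this
    split_ifs at hz <;> omega
  simp [insertMaxPad, Perm.viaEmbedding_apply_of_notMem _ _ _ hzs]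
  split_ifs at hz <;> omega

theorem contains_insertMaxPad : Contains (insertMaxPad k u) u :=
  ⟨headPos k, strictMono_headPos, fun a b => by
    rw [Fin.lt_def, Fin.lt_def, insertMaxPad_apply_headPos, insertMaxPad_apply_headPos]⟩

theorem insertMaxPad_injective : Function.Injective (insertMaxPad (m := m) k) := fun u u' h =>
  Equiv.ext fun j => Fin.ext <| by
    rw [← insertMaxPad_apply_headPos u, ← insertMaxPad_apply_headPos u', h]

end Insertion

section Fiber

variable {m : ℕ} {k : Fin (m + 1)}

theorem isBoolean_insertMaxPad_iff {u : Perm (Fin (min (k.val + 1) m))} :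
    IsBoolean (insertMaxPad k u) ↔ IsBoolean u := by
  refine ⟨fun hw => hw.of_contains (contains_insertMaxPad u), fun hu => ?_⟩
  set w := insertMaxPad k u
  -- Every position is `k`, a head position or in the tail; these facts alone force every
  -- occurrence of 321 or 3412 into the head, where `w` has the pattern `u`.
  have hval : ∀ p : Fin (m + 1), (p.val = k → (w p).val = m) ∧
      (p ≠ k → p.val ≤ min (k.val + 1) m → (w p).val < min (k.val + 1) m) ∧
      (k.val + 1 < p → (w p).val = p - 1) := fun p =>
    ⟨fun h => by rw [Fin.ext h]; simp [w], fun hpk hps => by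
      obtain ⟨j, rfl⟩ := exists_headPos_eq hpk hps
      exact insertMaxPad_apply_headPos u j ▸ (u j).isLt,
     val_insertMaxPad_of_add_one_lt u⟩
  have hpat : ∀ a b, u a < u b ↔ w (headPos k a) < w (headPos k b) := fun a b => by
    rw [Fin.lt_def, Fin.lt_def, insertMaxPad_apply_headPos, insertMaxPad_apply_headPos]
  have hpos := strictMono_headPos (k := k)
  refine ⟨fun h => ?_, fun h => ?_⟩
  · obtain ⟨i, j, l, hij, hjl, hlj, hji⟩ := (contains_p321_iff w).1 h
    obtain ⟨hi₁, hi₂, hi₃⟩ := hval i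
    obtain ⟨hj₁, hj₂, hj₃⟩ := hval j
    obtain ⟨hl₁, hl₂, hl₃⟩ := hval l
    obtain ⟨i, rfl⟩ := exists_headPos_eq (k := k) (p := i) (by omega) (by omega)
    obtain ⟨j, rfl⟩ := exists_headPos_eq (k := k) (p := j) (by omega) (by omega)
    obtain ⟨l, rfl⟩ := exists_headPos_eq (k := k) (p := l) (by omega) (by omega)
    exact hu.1 ((contains_p321_iff u).2 ⟨i, j, l, hpos.lt_iff_lt.1 hij, hpos.lt_iff_lt.1 hjl,
      (hpat l j).2 hlj, (hpat j i).2 hji⟩)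
  · obtain ⟨i, j, l, r, hij, hjl, hlr, hlr', hri, hij'⟩ := (contains_p3412_iff w).1 h
    obtain ⟨hi₁, hi₂, hi₃⟩ := hval i
    obtain ⟨hj₁, hj₂, hj₃⟩ := hval j
    obtain ⟨hl₁, hl₂, hl₃⟩ := hval l
    obtain ⟨hr₁, hr₂, hr₃⟩ := hval r
    obtain ⟨i, rfl⟩ := exists_headPos_eq (k := k) (p := i) (by omega) (by omega)
    obtain ⟨j, rfl⟩ := exists_headPos_eq (k := k) (p := j) (by omega) (by omega)
    obtain ⟨l, rfl⟩ := exists_headPos_eq (k := k) (p := l) (by omega) (by omega)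
    obtain ⟨r, rfl⟩ := exists_headPos_eq (k := k) (p := r) (by omega) (by omega)
    exact hu.2 ((contains_p3412_iff u).2 ⟨i, j, l, r, hpos.lt_iff_lt.1 hij,
      hpos.lt_iff_lt.1 hjl, hpos.lt_iff_lt.1 hlr, (hpat l r).2 hlr', (hpat r i).2 hri,
      (hpat i j).2 hij'⟩)

theorem exists_insertMaxPad_eq {w : Perm (Fin (m + 1))} (hw : IsBoolean w)
    (hk : w k = Fin.last m) : ∃ u, insertMaxPad k u = w := by
  let u : Perm (Fin (min (k.val + 1) m)) := Equiv.ofBijective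
    (fun j => ⟨w (headPos k j), hw.val_apply_lt_of_ne_max hk (headPos_ne j) (val_headPos_le j)⟩)
    (Finite.injective_iff_bijective.1 fun a b h =>
      strictMono_headPos.injective (w.injective (Fin.ext (Fin.mk.inj_iff.1 h))))
  refine ⟨u, Equiv.ext fun p => Fin.ext ?_⟩
  by_cases hpk : p = k
  · simp [hpk, hk]
  by_cases hkp : k.val + 1 < p
  · rw [val_insertMaxPad_of_add_one_lt u hkp, hw.val_apply_of_max_add_one_lt hk hkp]
  obtain ⟨j, rfl⟩ := exists_headPos_eq hpk (by omega)
  rw [insertMaxPad_apply_headPos]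
  rfl

theorem card_isBoolean_apply_eq_last :
    Nat.card {w : Perm (Fin (m + 1)) // IsBoolean w ∧ w k = Fin.last m} =
      numBoolean (min (k.val + 1) m) := by
  refine (Nat.card_congr (Equiv.ofBijective
    (fun u => ⟨insertMaxPad k u.1, isBoolean_insertMaxPad_iff.2 u.2, insertMaxPad_apply_self _⟩)
    ⟨fun u u' h => Subtype.ext (insertMaxPad_injective (congrArg Subtype.val h)), ?_⟩)).symm
  rintro ⟨w, hw, hk⟩
  obtain ⟨u, rfl⟩ := exists_insertMaxPad_eq hw hk
  exact ⟨⟨u, isBoolean_insertMaxPad_iff.1 hw⟩, rfl⟩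

end Fiber

theorem numBoolean_succ_eq_sum (m : ℕ) :
    numBoolean (m + 1) = ∑ k : Fin (m + 1), numBoolean (min (k.val + 1) m) := by
  let e : {w : Perm (Fin (m + 1)) // IsBoolean w} ≃
      Σ k : Fin (m + 1), {w : Perm (Fin (m + 1)) // IsBoolean w ∧ w k = Fin.last m} :=
    (Equiv.sigmaFiberEquiv fun w : {w // IsBoolean w} => w.1.symm (Fin.last m)).symm.trans
      (Equiv.sigmaCongrRight fun k => (Equiv.subtypeSubtypeEquivSubtypeInter IsBoolean
          fun w => w.symm (Fin.last m) = k).trans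
        (Equiv.subtypeEquivRight fun w => by rw [Equiv.symm_apply_eq, eq_comm]))
  rw [numBoolean, Nat.card_congr e, Nat.card_sigma]
  exact sum_congr rfl fun k _ => card_isBoolean_apply_eq_last

theorem numBoolean_succ (m : ℕ) :
    numBoolean (m + 1) = ∑ k ∈ range m, numBoolean (k + 1) + numBoolean m := by
  rw [numBoolean_succ_eq_sum, Fin.sum_univ_castSucc, ← Fin.sum_univ_eq_sum_range]
  simp

theorem numBoolean_zero : numBoolean 0 = 1 := by
  have h : ∀ w : Perm (Fin 0), IsBoolean w := fun _ =>
    ⟨fun ⟨f, _⟩ => (f 0).elim0, fun ⟨f, _⟩ => (f 0).elim0⟩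
  rw [numBoolean, Nat.card_congr (Equiv.subtypeUnivEquiv h), Nat.card_unique]

theorem sum_range_fib_two_mul_add_one (m : ℕ) :
    ∑ k ∈ range m, Nat.fib (2 * k + 1) = Nat.fib (2 * m) := by
  induction m with
  | zero => simp
  | succ m ih => rw [sum_range_succ, ih, mul_add_one, Nat.fib_add_two]

theorem numBoolean_succ_eq_fib (m : ℕ) : numBoolean (m + 1) = Nat.fib (2 * m + 1) := by
  induction m using Nat.strong_induction_on with
  | _ m ih =>
    rw [numBoolean_succ]
    rcases m with _ | m
    · simp [numBoolean_zero]
    rw [sum_congr rfl fun k hk => ih k (mem_range.1 hk), sum_range_fib_two_mul_add_one,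
      ih m m.lt_succ_self, Nat.mul_add_one, add_comm, ← Nat.fib_add_two]

/-- The number of permutations in `S_n` avoiding both 321 and 3412 (the Boolean
permutations) is the Fibonacci number `F_{2n-1}`, where `F_1 = F_2 = 1`. -/
theorem card_boolean_eq_fib (n : ℕ) (hn : 1 ≤ n) :
    Nat.card {w : Equiv.Perm (Fin n) // ¬ Contains w p321 ∧ ¬ Contains w p3412} =
      Nat.fib (2 * n - 1) := by
  obtain ⟨m, rfl⟩ := Nat.exists_eq_add_of_le' hn
  rw [show 2 * (m + 1) - 1 = 2 * m + 1 by omega]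
  exact numBoolean_succ_eq_fib m
end

section
/- A permutation w in S_4 indexes a singular Schubert variety (i.e., fails the condition that the number of transpositions t_{ij} with t_{ij} ≤ w in Bruhat order equals ℓ(w)) if and only if w = 3412 or w = 4231. Equivalently: for w in S_4, #{(i,j) : i < j, t_{ij} ≤ w} = ℓ(w) if and only if w ∉ {3412, 4231}. -/
/-- The number of inversions of a permutation of `Fin n`. -/
def inversions {n : ℕ} (w : Equiv.Perm (Fin n)) : ℕ :=
  (Finset.univ.filter (fun p : Fin n × Fin n => p.1 < p.2 ∧ w p.2 < w p.1)).card

/-- The permutation 4231 in one-line notation. -/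
def p4231 : Equiv.Perm (Fin 4) := ⟨![3, 1, 2, 0], ![3, 1, 2, 0], by decide, by decide⟩

/-!
Multiplying `u` on the right by `t_{ij}` with `u i < u j` creates the new inversion `(i, j)`,
and the inversions of `u` map injectively into the others, so every Bruhat step raises `ℓ`
strictly. Hence `v ≤ w` can be decided by searching downwards from `w` through at most `ℓ(w)`
steps, which makes the Bruhat order decidable and the theorem a finite computation over `S_4`.
-/

open Equiv

section
variable {n : ℕ}

def inversionSet (w : Perm (Fin n)) : Finset (Fin n × Fin n) :=
  Finset.univ.filter fun p => p.1 < p.2 ∧ w p.2 < w p.1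

@[simp]
theorem mem_inversionSet {w : Perm (Fin n)} {p : Fin n × Fin n} :
    p ∈ inversionSet w ↔ p.1 < p.2 ∧ w p.2 < w p.1 := by
  simp [inversionSet]

theorem inversions_lt_mul_swap (u : Perm (Fin n)) {i j : Fin n} (hij : i < j)
    (hu : u i < u j) : inversions u < inversions (u * swap i j) := by
  -- Besides `(i, j)`, `swap i j` puts out of order just the pairs `(i, k)`, `(k, j)`, `i < k < j`;
  -- inversions of `u` among them are still inversions of `u * swap i j`, so `f` fixes them.
  let f : Fin n × Fin n → Fin n × Fin n := fun p =>
    if swap i j p.1 < swap i j p.2 then (swap i j p.1, swap i j p.2) else p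
  have hmaps : Set.MapsTo f (inversionSet u) ((inversionSet (u * swap i j)).erase (i, j)) := by
    rintro ⟨a, b⟩ hp
    simp only [f, Finset.mem_coe, Finset.mem_erase, mem_inversionSet, Perm.mul_apply] at hp ⊢
    split_ifs with h
    · simp only [swap_apply_self, ne_eq, Prod.mk.injEq, swap_apply_eq_iff, swap_apply_left,
        swap_apply_right]
      refine ⟨?_, h, hp.2⟩
      rintro ⟨rfl, rfl⟩
      exact hij.not_gt hp.1
    · refine ⟨?_, hp.1, ?_⟩
      · rintro ⟨rfl, rfl⟩
        exact hu.not_gt hp.2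
      · dsimp only at h ⊢
        rw [swap_apply_def, swap_apply_def] at h ⊢
        split_ifs at h ⊢ <;> subst_vars <;> omega
  have hinj : Set.InjOn f (inversionSet u) := by
    rintro ⟨a, b⟩ hp ⟨c, d⟩ hq hf
    simp only [f, Finset.mem_coe, mem_inversionSet] at hp hq hf
    split_ifs at hf with hab hcd hcd <;> simp only [Prod.mk.injEq] at hf
    · simpa using hf
    · obtain ⟨rfl, rfl⟩ := hf
      simp only [swap_apply_self, not_lt] at hcd
      exact absurd hp.1 hcd.not_gt
    · obtain ⟨rfl, rfl⟩ := hf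
      simp only [swap_apply_self, not_lt] at hab
      exact absurd hq.1 hab.not_gt
    · rw [hf.1, hf.2]
  have hmem : (i, j) ∈ inversionSet (u * swap i j) := by simpa using ⟨hij, hu⟩
  have hle := Finset.card_le_card_of_injOn f hmaps hinj
  rw [Finset.card_erase_of_mem hmem] at hle
  have := Finset.card_pos.2 ⟨_, hmem⟩
  change (inversionSet u).card < (inversionSet (u * swap i j)).card
  omega

theorem BruhatLE.inversions_le {v w : Perm (Fin n)} (h : BruhatLE v w) :
    inversions v ≤ inversions w := by
  induction h with
  | refl => exact le_rfl
  | tail _ hstep ih =>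
    obtain ⟨i, j, hij, hlt, rfl⟩ := hstep
    exact ih.trans (inversions_lt_mul_swap _ hij hlt).le

def bruhatSearch : ℕ → Perm (Fin n) → Perm (Fin n) → Bool
  | 0, v, w => decide (v = w)
  | k + 1, v, w => decide (v = w ∨
      ∃ i j : Fin n, i < j ∧ w j < w i ∧ bruhatSearch k v (w * swap i j) = true)

theorem bruhatLE_of_bruhatSearch {k : ℕ} {v w : Perm (Fin n)} (h : bruhatSearch k v w = true) :
    BruhatLE v w := by
  induction k generalizing w with
  | zero =>
    rw [bruhatSearch, decide_eq_true_eq] at h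
    exact h ▸ .refl
  | succ k ih =>
    rw [bruhatSearch, decide_eq_true_eq] at h
    obtain rfl | ⟨i, j, hij, hji, hsearch⟩ := h
    · exact .refl
    · refine (ih hsearch).tail ⟨i, j, hij, ?_, ?_⟩
      · simpa using hji
      · simp [mul_assoc]

theorem bruhatSearch_of_bruhatLE {v w : Perm (Fin n)} (h : BruhatLE v w) {k : ℕ}
    (hk : inversions w ≤ inversions v + k) : bruhatSearch k v w = true := by
  induction h generalizing k with
  | refl => cases k <;> simp [bruhatSearch]
  | @tail u w hvu hstep ih =>
    obtain ⟨i, j, hij, hlt, rfl⟩ := hstep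
    have hlen := inversions_lt_mul_swap u hij hlt
    obtain ⟨k, rfl⟩ : ∃ m, k = m + 1 := Nat.exists_eq_succ_of_ne_zero (by
      have := BruhatLE.inversions_le hvu; omega)
    rw [bruhatSearch, decide_eq_true_eq]
    refine .inr ⟨i, j, hij, by simpa using hlt, ?_⟩
    rw [mul_swap_mul_self]
    exact ih (by omega)

theorem bruhatLE_iff_bruhatSearch (v w : Perm (Fin n)) :
    BruhatLE v w ↔ bruhatSearch (inversions w) v w = true :=
  ⟨fun h => bruhatSearch_of_bruhatLE h (by omega), bruhatLE_of_bruhatSearch⟩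

instance : DecidableRel (BruhatLE (n := n)) := fun v w =>
  decidable_of_iff _ (bruhatLE_iff_bruhatSearch v w).symm

end

/-- For `w ∈ S_4`, the number of transpositions `t_{ij} ≤ w` in Bruhat order equals `ℓ(w)`
if and only if `w` is neither 3412 nor 4231; i.e. `X_w` is singular iff `w ∈ {3412, 4231}`. -/
theorem smooth_iff_ne_3412_and_ne_4231 (w : Equiv.Perm (Fin 4)) :
    Nat.card {p : Fin 4 × Fin 4 //
        p.1 < p.2 ∧ BruhatLE (Equiv.swap p.1 p.2) w} = inversions w ↔
      (w ≠ p3412 ∧ w ≠ p4231) := by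
  rw [Nat.card_eq_fintype_card]
  revert w
  decide +kernel
end

section
/- In a Coxeter group W, x ≤ y in Bruhat order if and only if for any (equivalently, some) reduced expression y = s_{i_1}···s_{i_p}, there exists a subword s_{i_{j_1}}···s_{i_{j_k}} (with j_1 < ... < j_k) that is a reduced expression for x. -/
variable {B W : Type*} [Group W] {M : CoxeterMatrix B}

/-- One step of the Bruhat order on a Coxeter group: `y = x·t` for a reflection `t`
with `ℓ(x) < ℓ(y)`. -/
def CoxBruhatStep (cs : CoxeterSystem M W) (x y : W) : Prop :=
  ∃ t : W, cs.IsReflection t ∧ y = x * t ∧ cs.length x < cs.length y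

/-- Bruhat order on a Coxeter group: reflexive-transitive closure of `CoxBruhatStep`. -/
def CoxBruhatLE (cs : CoxeterSystem M W) : W → W → Prop :=
  Relation.ReflTransGen (CoxBruhatStep cs)

/-!
The direct implication rests on the strong exchange condition: if `t` is a reflection with
`ℓ(w t) < ℓ(w)`, then `t` occurs in the right inversion sequence of every word for `w`. So along
each step `u < u t` of a Bruhat chain, deleting one letter of a word for `u t` gives a word for
`u`, and at the end the deletion property extracts a reduced subword.

Strong exchange comes from the parity representation (Björner–Brenti, §1.4): a simple reflection
`s` acts on `W × ZMod 2` by `(x, ε) ↦ (s x s, ε + [x = s])`. These involutions satisfy the braid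
relations, so `w` acts by `(x, ε) ↦ (w x w⁻¹, ε + η(w, x))`, where `η(w, x)` is the parity of the
number of occurrences of `x` in the right inversion sequence of any word for `w`. Being defined
by a representation, `η` satisfies `η(w, t) = η(t, t) + η(w t, t) = 1 + 0`, the `0` because `t`
is not an inversion of `w t`, so `t` occurs in every word for `w`.

The converse is an induction along a reduced word for `y`, driven by the lifting property:
if `u ≤ v` then `s u ≤ v` or `s u ≤ s v`.
-/

theorem Finset.sum_range_two_mul {A : Type*} [AddCommMonoid A] (h : ℕ → A) (m : ℕ) :
    ∑ b ∈ range (2 * m), h b = ∑ a ∈ range m, (h (2 * a) + h (2 * a + 1)) := by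
  induction m with
  | zero => simp
  | succ m ih => rw [Nat.mul_succ, sum_range_succ, sum_range_succ, sum_range_succ, ih, add_assoc]

theorem Equiv.Perm.pow_apply_of_apply_eq_conj {G A : Type*} [Group G] [AddCommMonoid A]
    {ψ : Equiv.Perm (G × A)} {g : G} {f : G → A} (hψ : ∀ x a, ψ (x, a) = (g * x * g⁻¹, a + f x))
    (k : ℕ) (x : G) (a : A) :
    (ψ ^ k) (x, a) =
      (g ^ k * x * (g ^ k)⁻¹, a + ∑ n ∈ Finset.range k, f (g ^ n * x * (g ^ n)⁻¹)) := by
  induction k generalizing x a with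
  | zero => simp
  | succ k ih =>
    have hconj (n : ℕ) :
        g ^ n * (g * x * g⁻¹) * (g ^ n)⁻¹ = g ^ (n + 1) * x * (g ^ (n + 1))⁻¹ := by
      group
    rw [pow_succ, Equiv.Perm.mul_apply, hψ, ih, Finset.sum_range_succ']
    simp only [hconj, pow_zero, one_mul, inv_one, mul_one, add_assoc, add_comm (f x)]

open Classical in
noncomputable def parityDelta {α : Type*} (t x : α) : ZMod 2 := if x = t then 1 else 0

theorem parityDelta_self {α : Type*} (t : α) : parityDelta t t = 1 := if_pos rfl

theorem parityDelta_of_ne {α : Type*} {t x : α} (h : x ≠ t) : parityDelta t x = 0 := if_neg h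

theorem parityDelta_conj (a t x : W) :
    parityDelta t (a * x * a⁻¹) = parityDelta (a⁻¹ * t * a) x := by
  unfold parityDelta
  congr 1
  exact propext ⟨fun h => by rw [← h]; group, fun h => by rw [h]; group⟩

namespace CoxeterSystem

open List

variable (cs : CoxeterSystem M W)

local prefix:100 "s " => cs.simple
local prefix:100 "π " => cs.wordProd
local prefix:100 "ℓ " => cs.length
local prefix:100 "ris " => cs.rightInvSeq

noncomputable def parityPerm (i : B) : Equiv.Perm (W × ZMod 2) :=
  Function.Involutive.toPerm (fun p => (s i * p.1 * (s i)⁻¹, p.2 + parityDelta (s i) p.1)) <| by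
    rintro ⟨x, ε⟩
    have hx : s i * (s i * x * (s i)⁻¹) * (s i)⁻¹ = x := by
      rw [inv_simple, ← mul_assoc, simple_mul_simple_cancel_right, simple_mul_simple_cancel_left]
    have hδ : parityDelta (s i) (s i * x * (s i)⁻¹) = parityDelta (s i) x := by
      rw [parityDelta_conj, inv_simple, simple_mul_simple_self, one_mul]
    simp only [hx, hδ, add_assoc, CharTwo.add_self_eq_zero, add_zero]

theorem parityPerm_apply (i : B) (x : W) (ε : ZMod 2) :
    cs.parityPerm i (x, ε) = (s i * x * (s i)⁻¹, ε + parityDelta (s i) x) := rfl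

theorem isLiftable_parityPerm : M.IsLiftable cs.parityPerm := by
  intro i j
  set g := s i * s j with hg
  have hψ (x : W) (ε : ZMod 2) : (cs.parityPerm i * cs.parityPerm j) (x, ε) =
      (g * x * g⁻¹, ε + (parityDelta (s j) x + parityDelta (s i) (s j * x * (s j)⁻¹))) := by
    rw [Equiv.Perm.mul_apply, parityPerm_apply, parityPerm_apply, hg, mul_inv_rev]
    simp only [add_assoc, mul_assoc]
  have hflip (n : ℕ) : (g ^ n)⁻¹ * s j = s j * g ^ n := by
    have : s j * g * (s j)⁻¹ = g⁻¹ := by simp [hg, mul_assoc]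
    rw [← inv_pow, ← this, conj_pow, inv_mul_cancel_right]
  have hterm (n : ℕ) (x : W) :
      parityDelta (s j) (g ^ n * x * (g ^ n)⁻¹) +
          parityDelta (s i) (s j * (g ^ n * x * (g ^ n)⁻¹) * (s j)⁻¹) =
        parityDelta (s j * g ^ (2 * n)) x + parityDelta (s j * g ^ (2 * n + 1)) x := by
    rw [parityDelta_conj, show s j * (g ^ n * x * (g ^ n)⁻¹) * (s j)⁻¹ =
      (s j * g ^ n) * x * (s j * g ^ n)⁻¹ by group, parityDelta_conj]
    congr 2
    · rw [hflip, mul_assoc, ← pow_add, two_mul]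
    · calc (s j * g ^ n)⁻¹ * s i * (s j * g ^ n) = ((g ^ n)⁻¹ * s j) * g * g ^ n := by
            simp only [hg, mul_inv_rev, inv_simple, mul_assoc]
        _ = s j * g ^ (2 * n + 1) := by
            rw [hflip, mul_assoc, mul_assoc, ← pow_succ', ← pow_add, ← add_assoc, ← two_mul]
  have hm : g ^ M i j = 1 := cs.simple_mul_simple_pow i j
  -- the `2 m` summands are the indicators of the `s j * g ^ b`, which have period `m = M i j`
  refine Equiv.ext fun ⟨x, ε⟩ => ?_
  rw [Equiv.Perm.pow_apply_of_apply_eq_conj hψ, hm]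
  simp only [hterm]
  rw [← Finset.sum_range_two_mul (fun b => parityDelta (s j * g ^ b) x), two_mul,
    Finset.sum_range_add]
  simp only [pow_add, hm, one_mul, CharTwo.add_self_eq_zero, add_zero, inv_one, mul_one,
    Equiv.Perm.one_apply]

noncomputable def parityRep : W →* Equiv.Perm (W × ZMod 2) :=
  cs.lift ⟨cs.parityPerm, cs.isLiftable_parityPerm⟩

noncomputable def inversionParity (w t : W) : ZMod 2 := (cs.parityRep w (t, 0)).2

theorem parityRep_simple (i : B) : cs.parityRep (s i) = cs.parityPerm i :=
  cs.lift_apply_simple cs.isLiftable_parityPerm i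

theorem parityRep_apply (w x : W) (ε : ZMod 2) :
    cs.parityRep w (x, ε) = (w * x * w⁻¹, ε + cs.inversionParity w x) := by
  induction w using cs.simple_induction_left generalizing x ε with
  | one => simp [inversionParity]
  | mul_simple_left w i ih =>
    have h (ε : ZMod 2) : cs.parityRep (s i * w) (x, ε) = (s i * w * x * (s i * w)⁻¹,
        ε + (cs.inversionParity w x + parityDelta (s i) (w * x * w⁻¹))) := by
      rw [map_mul, Equiv.Perm.mul_apply, ih, parityRep_simple, parityPerm_apply]
      simp only [mul_inv_rev, mul_assoc, add_assoc]
    rw [h]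
    congr 2
    exact ((congrArg Prod.snd (h 0)).trans (zero_add _)).symm

theorem inversionParity_mul (v w x : W) : cs.inversionParity (v * w) x =
    cs.inversionParity w x + cs.inversionParity v (w * x * w⁻¹) := by
  rw [inversionParity, map_mul, Equiv.Perm.mul_apply, parityRep_apply, parityRep_apply, zero_add]

theorem inversionParity_simple (i : B) (x : W) :
    cs.inversionParity (s i) x = parityDelta (s i) x := by
  rw [inversionParity, parityRep_simple, parityPerm_apply, zero_add]

theorem inversionParity_one (x : W) : cs.inversionParity 1 x = 0 := by
  simp [inversionParity]

theorem inversionParity_inv (w x : W) :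
    cs.inversionParity w⁻¹ x = cs.inversionParity w (w⁻¹ * x * w) := by
  have h := cs.inversionParity_mul w w⁻¹ x
  rw [mul_inv_cancel, inversionParity_one, inv_inv, eq_comm, add_eq_zero_iff_eq_neg,
    ZMod.neg_eq_self_mod_two] at h
  exact h

theorem inversionParity_self {t : W} (ht : cs.IsReflection t) : cs.inversionParity t t = 1 := by
  obtain ⟨u, i, rfl⟩ := ht
  have hconj : u⁻¹ * (u * s i * u⁻¹) * u = s i := by group
  rw [inversionParity_mul, inversionParity_inv, inv_inv, hconj, inversionParity_mul,
    inversionParity_simple, parityDelta_self, mul_inv_cancel_right, add_left_comm,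
    CharTwo.add_self_eq_zero, add_zero]

theorem inversionParity_wordProd_eq_zero {ω : List B} {t : W} (ht : t ∉ ris ω) :
    cs.inversionParity (π ω) t = 0 := by
  induction ω with
  | nil => exact cs.inversionParity_one t
  | cons i ω ih =>
    rw [rightInvSeq, mem_cons, not_or] at ht
    rw [wordProd_cons, inversionParity_mul, ih ht.2, inversionParity_simple, parityDelta_conj,
      parityDelta_of_ne ht.1, zero_add]

theorem mem_rightInvSeq_of_isRightInversion {ω : List B} {t : W}
    (h : cs.IsRightInversion (π ω) t) : t ∈ ris ω := by
  obtain ⟨ht, hlt⟩ := h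
  obtain ⟨ω₁, hω₁, hprod⟩ := cs.exists_isReduced (π ω * t)
  have hnotmem : t ∉ ris ω₁ := fun hmem => by
    have h₁ := (cs.isRightInversion_of_mem_rightInvSeq hω₁ hmem).2
    rw [← hprod, mul_assoc, ht.mul_self, mul_one] at h₁
    exact lt_asymm hlt h₁
  have hparity : cs.inversionParity (π ω) t = 1 := by
    calc cs.inversionParity (π ω) t = cs.inversionParity (π ω * t * t) t := by
          rw [mul_assoc, ht.mul_self, mul_one]
      _ = 1 := by
          rw [inversionParity_mul, inversionParity_self cs ht, mul_inv_cancel_right, hprod,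
            inversionParity_wordProd_eq_zero cs hnotmem, add_zero]
  by_contra hmem
  rw [inversionParity_wordProd_eq_zero cs hmem] at hparity
  exact zero_ne_one hparity

theorem exists_wordProd_eraseIdx_of_mem_rightInvSeq {ω : List B} {t : W} (h : t ∈ ris ω) :
    ∃ j < ω.length, π (ω.eraseIdx j) = π ω * t := by
  obtain ⟨j, hj, rfl⟩ := getElem_of_mem h
  refine ⟨j, by simpa using hj, ?_⟩
  rw [← wordProd_mul_getD_rightInvSeq, getD_eq_getElem _ _ hj]

theorem exists_reduced_sublist (ω : List B) :
    ∃ ω' : List B, ω'.Sublist ω ∧ cs.IsReduced ω' ∧ π ω' = π ω := by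
  induction ω with
  | nil => exact ⟨[], Sublist.refl _, by simp [IsReduced], rfl⟩
  | cons i ω ih =>
    obtain ⟨υ, hsub, hυ, hprod⟩ := ih
    rcases cs.length_simple_mul (π υ) i with hup | hdown
    · refine ⟨i :: υ, hsub.cons_cons i, ?_, by rw [wordProd_cons, wordProd_cons, hprod]⟩
      rw [IsReduced, wordProd_cons, hup, hυ, length_cons]
    · have hleft : π υ * ((π υ)⁻¹ * s i * π υ) = s i * π υ := by group
      have hinv : cs.IsRightInversion (π υ) ((π υ)⁻¹ * s i * π υ) :=
        ⟨⟨(π υ)⁻¹, i, by rw [inv_inv]⟩, by rw [hleft]; omega⟩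
      obtain ⟨j, hj, hj'⟩ := cs.exists_wordProd_eraseIdx_of_mem_rightInvSeq
        (cs.mem_rightInvSeq_of_isRightInversion hinv)
      refine ⟨υ.eraseIdx j, (eraseIdx_sublist υ j).trans (hsub.cons i), ?_, ?_⟩
      · rw [IsReduced, hj', hleft, length_eraseIdx_of_lt hj, ← hυ]
        omega
      · rw [hj', hleft, wordProd_cons, hprod]

variable {cs}

theorem bruhatStep_simple_mul {w : W} {i : B} (h : ℓ w < ℓ (s i * w)) :
    CoxBruhatStep cs w (s i * w) :=
  ⟨w⁻¹ * s i * w, ⟨w⁻¹, i, by rw [inv_inv]⟩, by group, h⟩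

theorem IsReduced.bruhatStep_wordProd_cons {i : B} {ω : List B} (hω : cs.IsReduced (i :: ω)) :
    CoxBruhatStep cs (π ω) (π (i :: ω)) := by
  rw [wordProd_cons]
  apply bruhatStep_simple_mul
  rw [← wordProd_cons, hω, length_cons]
  exact Nat.lt_succ_of_le (cs.length_wordProd_le ω)

theorem _root_.CoxBruhatStep.lift_simple_mul {z v : W} (h : CoxBruhatStep cs z v) (i : B) :
    CoxBruhatLE cs (s i * z) v ∨ CoxBruhatLE cs (s i * z) (s i * v) := by
  obtain ⟨t, ht, rfl, hlt⟩ := h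
  by_cases hup : ℓ (s i * z) < ℓ (s i * z * t)
  · exact .inr (.single ⟨t, ht, (mul_assoc ..).symm, by rwa [← mul_assoc]⟩)
  · left
    obtain ⟨ω, hω, rfl⟩ := cs.exists_isReduced z
    have hinv : cs.IsRightInversion (π (i :: ω)) t :=
      ⟨ht, by rw [wordProd_cons]; exact (not_lt.mp hup).lt_of_ne (ht.length_mul_left_ne _)⟩
    -- `t` cannot be a later entry of the sequence: those are right inversions of `π ω`
    rcases mem_cons.mp (cs.mem_rightInvSeq_of_isRightInversion hinv) with rfl | hmem
    · rw [show π ω * ((π ω)⁻¹ * s i * π ω) = s i * π ω by group]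
      exact .refl
    · exact absurd hlt (lt_asymm (cs.isRightInversion_of_mem_rightInvSeq hω hmem).2)

theorem _root_.CoxBruhatLE.lift_simple_mul {u v : W} (h : CoxBruhatLE cs u v) (i : B) :
    CoxBruhatLE cs (s i * u) v ∨ CoxBruhatLE cs (s i * u) (s i * v) := by
  induction h with
  | refl => exact .inr .refl
  | tail _ hstep ih =>
    rcases ih with h | h
    · exact .inl (h.tail hstep)
    · exact (hstep.lift_simple_mul i).imp h.trans h.trans

theorem IsReduced.bruhatLE_wordProd_of_sublist {ω ω' : List B} (hω : cs.IsReduced ω)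
    (h : ω'.Sublist ω) : CoxBruhatLE cs (π ω') (π ω) := by
  induction h with
  | slnil => exact .refl
  | cons i _ ih => exact (ih (hω.drop 1)).tail hω.bruhatStep_wordProd_cons
  | cons_cons i _ ih =>
    rw [wordProd_cons]
    rcases (ih (hω.drop 1)).lift_simple_mul i with h | h
    · exact h.tail hω.bruhatStep_wordProd_cons
    · rwa [← wordProd_cons]

theorem _root_.CoxBruhatLE.exists_reduced_sublist {x y : W} (h : CoxBruhatLE cs x y)
    {ω : List B} (hω : π ω = y) : ∃ ω' : List B, ω'.Sublist ω ∧ cs.IsReduced ω' ∧ π ω' = x := by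
  induction h generalizing ω with
  | refl => exact hω ▸ cs.exists_reduced_sublist ω
  | tail _ hstep ih =>
    obtain ⟨t, ht, rfl, hlt⟩ := hstep
    have hinv : cs.IsRightInversion (π ω) t :=
      ⟨ht, by rwa [hω, mul_assoc, ht.mul_self, mul_one]⟩
    obtain ⟨j, -, hj⟩ := cs.exists_wordProd_eraseIdx_of_mem_rightInvSeq
      (cs.mem_rightInvSeq_of_isRightInversion hinv)
    obtain ⟨ω', hsub, hred, hprod⟩ := ih (ω := ω.eraseIdx j)
      (by rw [hj, hω, mul_assoc, ht.mul_self, mul_one])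
    exact ⟨ω', hsub.trans (eraseIdx_sublist ω j), hred, hprod⟩

end CoxeterSystem

/-- Subword property of the Bruhat order: `x ≤ y` if and only if every reduced expression
for `y` has a subword which is a reduced expression for `x`. -/
theorem bruhatLE_iff_subword (cs : CoxeterSystem M W) (x y : W) :
    CoxBruhatLE cs x y ↔
      ∀ ω : List B, cs.IsReduced ω → cs.wordProd ω = y →
        ∃ ω' : List B, ω'.Sublist ω ∧ cs.IsReduced ω' ∧ cs.wordProd ω' = x := by
  refine ⟨fun h ω _ hω => h.exists_reduced_sublist hω, fun h => ?_⟩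
  obtain ⟨ω, hω, rfl⟩ := cs.exists_isReduced y
  obtain ⟨ω', hsub, -, rfl⟩ := h ω hω rfl
  exact hω.bruhatLE_wordProd_of_sublist hsub
end
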